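/- arXiv:2103.10743 — 2 statements merged into one kernel-verified Lean document; each statement's English description precedes it below -/
import Mathlib

section
/- Let c : ℝⁿ × ℝᵐ → ℝ^{n_c} be C¹ with |D_x c| + |D_v c| ≤ C and D_v c Lipschitz with constant C on a neighborhood of the relevant points. Suppose (x̃, ṽ) satisfies c(x̃,ṽ) ≤ 0 and there exist w with |w| ≤ C and ε > 0 such that c(x̃,ṽ) + D_v c(x̃,ṽ)w ≤ -ε. Then there exist δ > 0 and C' > 0 (depending only on C and ε) such that for every x with |x - x̃| ≤ δ, the point v := ṽ + θw with θ = 2C'|x-x̃|/ε satisfies c(x,v) ≤ 0 and |v - ṽ| ≤ C·C'·(2/ε)|x - x̃|. -/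
/-!
Expand `c` at `(x̃, ṽ)` along the step `(x - x̃, θ w)`. The linear part splits into the convex
combination `(1 - θ) c(x̃, ṽ) + θ (c(x̃, ṽ) + D c(x̃, ṽ) (0, w)) ≤ -θ ε` plus an `x`-drift of size at
most `C r`, `r = |x - x̃|`, and the Lipschitz derivative bounds the Taylor remainder by
`C |(x - x̃, θ w)|² ≤ C (r K)²`, `K = 1 + 2 C² / ε`. The choice `θ = 2 C r / ε` makes the gain
`θ ε = 2 C r` pay for the drift and, once `r K² ≤ 1`, for the remainder too.
-/

open scoped NNReal

theorem norm_sub_sub_fderiv_le_of_lipschitzWith {E F : Type*} [NormedAddCommGroup E]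
    [NormedSpace ℝ E] [NormedAddCommGroup F] [NormedSpace ℝ F] {f : E → F} {f' : E → E →L[ℝ] F}
    {K : ℝ≥0} (hf : ∀ p, HasFDerivAt f (f' p) p) (hf' : LipschitzWith K f') (x y : E) :
    ‖f y - f x - f' x (y - x)‖ ≤ K * ‖y - x‖ ^ 2 := by
  have bound : ∀ z ∈ segment ℝ x y, ‖f' z - f' x‖ ≤ K * ‖y - x‖ := fun z hz => by
    have hzx : dist z x ≤ dist x y := segment_subset_closedBall_left x y hz
    calc ‖f' z - f' x‖ = dist (f' z) (f' x) := (dist_eq_norm _ _).symm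
      _ ≤ K * dist z x := hf'.dist_le_mul z x
      _ ≤ K * dist x y := by gcongr
      _ = K * ‖y - x‖ := by rw [dist_comm, dist_eq_norm]
  calc _ ≤ K * ‖y - x‖ * ‖y - x‖ :=
        (convex_segment x y).norm_image_sub_le_of_norm_hasFDerivWithin_le'
          (fun z _ => (hf z).hasFDerivWithinAt) bound (left_mem_segment ℝ x y)
          (right_mem_segment ℝ x y)
    _ = K * ‖y - x‖ ^ 2 := by ring

theorem EuclideanSpace.apply_le_norm {ι : Type*} [Fintype ι] (y : EuclideanSpace ℝ ι) (i : ι) :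
    y i ≤ ‖y‖ :=
  (le_abs_self _).trans (by simpa using PiLp.norm_apply_le y i)

section

variable {E V ι : Type*} [NormedAddCommGroup E] [NormedSpace ℝ E] [NormedAddCommGroup V]
  [NormedSpace ℝ V] [Fintype ι] {c : E × V → EuclideanSpace ℝ ι}
  {Dc : E × V → (E × V) →L[ℝ] EuclideanSpace ℝ ι}

theorem apply_mk_add_smul_le (hdiff : ∀ p, HasFDerivAt c (Dc p) p) {K : ℝ≥0}
    (hlip : LipschitzWith K Dc) (x x₀ : E) (v₀ w : V) (θ : ℝ) (i : ι) :
    c (x, v₀ + θ • w) i ≤ (1 - θ) * c (x₀, v₀) i + θ * (c (x₀, v₀) i + Dc (x₀, v₀) (0, w) i)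
      + ‖Dc (x₀, v₀)‖ * ‖x - x₀‖ + K * ‖(x - x₀, θ • w)‖ ^ 2 := by
  set p₀ : E × V := (x₀, v₀)
  have hstep : (x, v₀ + θ • w) - p₀ = (x - x₀, 0) + θ • (0, w) := by
    ext <;> simp [p₀]
  have hlinear : Dc p₀ ((x, v₀ + θ • w) - p₀) i = Dc p₀ (x - x₀, 0) i + θ * Dc p₀ (0, w) i := by
    rw [hstep, map_add, map_smul]; rfl
  have hx : Dc p₀ (x - x₀, 0) i ≤ ‖Dc p₀‖ * ‖x - x₀‖ :=
    calc Dc p₀ (x - x₀, 0) i ≤ ‖Dc p₀ (x - x₀, 0)‖ := EuclideanSpace.apply_le_norm _ i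
      _ ≤ ‖Dc p₀‖ * ‖((x - x₀, 0) : E × V)‖ := (Dc p₀).le_opNorm _
      _ = ‖Dc p₀‖ * ‖x - x₀‖ := by simp
  have hremainder :
      (c (x, v₀ + θ • w) - c p₀ - Dc p₀ ((x, v₀ + θ • w) - p₀)) i ≤ K * ‖(x - x₀, θ • w)‖ ^ 2 :=
    calc _ ≤ _ := EuclideanSpace.apply_le_norm _ i
      _ ≤ K * ‖(x, v₀ + θ • w) - p₀‖ ^ 2 := norm_sub_sub_fderiv_le_of_lipschitzWith hdiff hlip _ _
      _ = K * ‖(x - x₀, θ • w)‖ ^ 2 := by simp [p₀]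
  simp only [PiLp.sub_apply, hlinear] at hremainder
  linarith

end

/-- Metric regularity for mixed constraints under an inward-pointing
(Mangasarian–Fromovitz) condition: near a feasible pair (x̃,ṽ), for each x close to x̃
the control v = ṽ + θw with θ = 2C'|x-x̃|/ε is feasible and |v-ṽ| ≤ C·C'·(2/ε)|x-x̃|. -/
theorem metric_regularity_mixed_constraints {n m nc : ℕ}
    (c : EuclideanSpace ℝ (Fin n) × EuclideanSpace ℝ (Fin m) → EuclideanSpace ℝ (Fin nc))
    (Dc : EuclideanSpace ℝ (Fin n) × EuclideanSpace ℝ (Fin m) →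
      (EuclideanSpace ℝ (Fin n) × EuclideanSpace ℝ (Fin m)) →L[ℝ] EuclideanSpace ℝ (Fin nc))
    (C ε : ℝ) (hC : 0 < C) (hε : 0 < ε)
    (hdiff : ∀ p, HasFDerivAt c (Dc p) p)
    (hbound : ∀ p, ‖Dc p‖ ≤ C)
    (hlip : LipschitzWith (Real.toNNReal C) Dc)
    (xt : EuclideanSpace ℝ (Fin n)) (vt w : EuclideanSpace ℝ (Fin m))
    (hfeas : ∀ i, c (xt, vt) i ≤ 0)
    (hw : ‖w‖ ≤ C)
    (hinward : ∀ i, c (xt, vt) i + Dc (xt, vt) (0, w) i ≤ -ε) :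
    ∃ δ > (0:ℝ), ∃ C' > (0:ℝ), ∀ x : EuclideanSpace ℝ (Fin n), ‖x - xt‖ ≤ δ →
      (∀ i, c (x, vt + (2 * C' * ‖x - xt‖ / ε) • w) i ≤ 0) ∧
      ‖(vt + (2 * C' * ‖x - xt‖ / ε) • w) - vt‖ ≤ C * C' * (2 / ε) * ‖x - xt‖ := by
  set K : ℝ := 1 + 2 * C * C / ε
  refine ⟨min (ε / (2 * C)) (1 / K ^ 2), by positivity, C, hC, fun x hx => ?_⟩
  set r := ‖x - xt‖
  set θ := 2 * C * r / ε
  have hr : 0 ≤ r := norm_nonneg _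
  have hθ : 0 ≤ θ := by positivity
  have hθε : θ * ε = 2 * C * r := div_mul_cancel₀ _ hε.ne'
  have hθ_le_one : θ ≤ 1 := by
    rw [div_le_one hε, ← le_div_iff₀' (by positivity)]; exact hx.trans (min_le_left _ _)
  have hrK : r * K ^ 2 ≤ 1 := (le_div_iff₀ (by positivity)).1 (hx.trans (min_le_right _ _))
  have hstep : ‖θ • w‖ ≤ θ * C := by rw [norm_smul, Real.norm_of_nonneg hθ]; gcongr
  refine ⟨fun i => ?_, by rw [add_sub_cancel_left]; exact hstep.trans_eq (by ring)⟩
  have hdisp : ‖(x - xt, θ • w)‖ ≤ r * K := by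
    rw [Prod.norm_mk, show r * K = r + θ * C by ring]
    exact max_le (le_add_of_nonneg_right (by positivity)) (hstep.trans (le_add_of_nonneg_left hr))
  have hexpand := apply_mk_add_smul_le hdiff hlip x xt vt w θ i
  rw [Real.coe_toNNReal C hC.le] at hexpand
  have hold : (1 - θ) * c (xt, vt) i ≤ 0 :=
    mul_nonpos_of_nonneg_of_nonpos (sub_nonneg.2 hθ_le_one) (hfeas i)
  have hgain := mul_le_mul_of_nonneg_left (hinward i) hθ
  have hdrift : ‖Dc (xt, vt)‖ * r ≤ C * r := by gcongr; exact hbound _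
  have hremainder : C * ‖(x - xt, θ • w)‖ ^ 2 ≤ C * r :=
    calc C * ‖(x - xt, θ • w)‖ ^ 2 ≤ C * (r * K) ^ 2 := by gcongr
      _ = C * r * (r * K ^ 2) := by ring
      _ ≤ C * r := mul_le_of_le_one_right (by positivity) hrK
  linarith
end

section
/- Let (γ_k, v_k) ⇀ (γ̄, v̄) with γ_k → γ̄ uniformly on [0,T] and v_k ⇀ v̄ weakly in L²(0,T;ℝᵐ). Let c : ℝⁿ × ℝᵐ → ℝ be C¹, convex in v, with |D_x c| + |D_v c| ≤ C on the relevant bounded region and D_v c(γ̄(·), v̄(·)) ∈ L². If c(γ_k(t), v_k(t)) ≤ 0 for a.e. t and all k, then c(γ̄(t), v̄(t)) ≤ 0 for a.e. t ∈ (0,T). -/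
/-!
Convexity in `v` and the Lipschitz constant `K` of `c` give, pointwise and for `k` large,
`c(γ̄, v̄) ≤ c(γ_k, v_k) + K‖γ̄ - γ_k‖ + ⟪v̄ - v_k, ∇_v c(γ̄, v̄)⟫ ≤ ε + ⟪v̄ - v_k, ∇_v c(γ̄, v̄)⟫`.
Integrating over a measurable set `A` and testing the weak convergence against the bounded field
`1_A ∇_v c(γ̄, v̄)` gives `∫_A c(γ̄, v̄) ≤ ε |A|` for every `ε > 0`, hence `c(γ̄, v̄) ≤ 0` a.e.
-/

open MeasureTheory Set Filter Topology
open scoped RealInnerProductSpace Gradient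

theorem ConvexOn.add_fderiv_sub_le {E : Type*} [NormedAddCommGroup E] [NormedSpace ℝ E]
    {φ : E → ℝ} (hφ : ConvexOn ℝ univ φ) {φ' : E →L[ℝ] ℝ} {v : E} (hd : HasFDerivAt φ φ' v)
    (w : E) : φ v + φ' (w - v) ≤ φ w := by
  let L : ℝ →ᵃ[ℝ] E := AffineMap.lineMap v w
  have hL : ∀ s : ℝ, L s = s • (w - v) + v := AffineMap.lineMap_apply v w
  have hline : HasDerivAt L (w - v) 0 := by
    rw [show ⇑L = fun s => s • (w - v) + v from funext hL]
    simpa using ((hasDerivAt_id (0:ℝ)).smul_const (w - v)).add_const v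
  have hφL : HasDerivAt (φ ∘ L) (φ' (w - v)) 0 := by
    refine HasFDerivAt.comp_hasDerivAt (0:ℝ) ?_ hline
    simpa [hL] using hd
  have hslope := (hφ.comp_affineMap L).le_slope_of_hasDerivAt (mem_univ 0) (mem_univ 1) one_pos hφL
  simp only [slope_def_field, Function.comp_apply, hL, one_smul, zero_smul, sub_add_cancel,
    zero_add, sub_zero, div_one] at hslope
  linarith

theorem TendstoUniformlyOn.eventually_forall_mul_norm_sub_le {ι α E : Type*}
    [SeminormedAddCommGroup E] {F : ι → α → E} {f : α → E} {l : Filter ι} {s : Set α}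
    (h : TendstoUniformlyOn F f l s) (K : NNReal) {ε : ℝ} (hε : 0 < ε) :
    ∀ᶠ k in l, ∀ x ∈ s, K * ‖f x - F k x‖ ≤ ε := by
  filter_upwards [Metric.tendstoUniformlyOn_iff.mp h (ε / (K + 1)) (by positivity)] with k hk x hx
  calc K * ‖f x - F k x‖ ≤ (K + 1) * (ε / (K + 1)) := by
        gcongr
        · linarith
        · exact dist_eq_norm (f x) (F k x) ▸ (hk x hx).le
    _ = ε := mul_div_cancel₀ _ (by positivity)

section PartialGradient

variable {E F : Type*} [NormedAddCommGroup E] [NormedAddCommGroup F] [InnerProductSpace ℝ F]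
  [CompleteSpace F] {c : E × F → ℝ}

open InnerProductSpace ContinuousLinearMap

theorem norm_gradient_prodMk_right_le {K : NNReal} (hc : LipschitzWith K c) (x : E) (v : F) :
    ‖∇ (fun w => c (x, w)) v‖ ≤ K := by
  have : LipschitzWith K fun w => c (x, w) := by
    simpa [Function.comp_def] using hc.comp (LipschitzWith.prodMk_left x)
  rw [← (toDual ℝ F).norm_map, toDual_gradient]
  exact norm_fderiv_le_of_lipschitz ℝ this

variable [NormedSpace ℝ E]

theorem gradient_prodMk_right {x : E} {v : F} (hc : DifferentiableAt ℝ c (x, v)) :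
    ∇ (fun w => c (x, w)) v = (toDual ℝ F).symm ((fderiv ℝ c (x, v)).comp (inr ℝ E F)) :=
  (hasFDerivAt_iff_hasGradientAt.mp
    (hc.hasFDerivAt.comp v (hasFDerivAt_prodMk_right x v))).gradient

theorem continuous_gradient_prodMk_right (hc : ContDiff ℝ 1 c) :
    Continuous fun p : E × F => ∇ (fun w => c (p.1, w)) p.2 := by
  have hdiff := hc.differentiable one_ne_zero
  simp_rw [gradient_prodMk_right (hdiff _)]
  exact (toDual ℝ F).symm.continuous.comp
    (((compL ℝ F (E × F) ℝ).flip (inr ℝ E F)).continuous.comp (hc.continuous_fderiv one_ne_zero))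

theorem le_add_mul_norm_sub_add_inner_gradient {K : NNReal} (hc : Differentiable ℝ c)
    (hlip : LipschitzWith K c) (hconv : ∀ x, ConvexOn ℝ univ fun v => c (x, v))
    (x y : E) (v w : F) :
    c (x, v) ≤ c (y, w) + K * ‖x - y‖ + ⟪v - w, ∇ (fun v => c (x, v)) v⟫ := by
  have hgrad : HasFDerivAt (fun v => c (x, v)) (toDual ℝ F (∇ (fun v => c (x, v)) v)) v :=
    ((hc (x, v)).hasFDerivAt.comp v (hasFDerivAt_prodMk_right x v)).differentiableAt.hasGradientAt
  have hconvex := (hconv x).add_fderiv_sub_le hgrad w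
  have hshift : c (x, w) - c (y, w) ≤ K * ‖x - y‖ := by
    simpa using (le_abs_self _).trans (hlip.norm_sub_le (x, w) (y, w))
  rw [toDual_apply_apply, ← neg_sub v w, inner_neg_right, real_inner_comm] at hconvex
  linarith

end PartialGradient

section Integrals

variable {α F : Type*} [MeasurableSpace α] {μ : Measure α} [NormedAddCommGroup F]
  [InnerProductSpace ℝ F]

theorem MeasureTheory.MemLp.integrable_inner {f g : α → F} (hf : MemLp f 2 μ)
    (hg : MemLp g 2 μ) : Integrable (fun x => ⟪f x, g x⟫) μ :=
  (L2.integrable_inner hf.toLp hg.toLp).congr <| by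
    filter_upwards [hf.coeFn_toLp, hg.coeFn_toLp] with x hfx hgx
    rw [hfx, hgx]

theorem LipschitzWith.integrable_comp [IsFiniteMeasure μ] {E : Type*} [NormedAddCommGroup E]
    {c : E → ℝ} {K : NNReal} (hc : LipschitzWith K c) {p : α → E} (hp : Integrable p μ) :
    Integrable (fun x => c (p x)) μ := by
  refine ((integrable_const ‖c 0‖).add (hp.norm.const_mul K)).mono'
    (hc.continuous.comp_aestronglyMeasurable hp.1) (ae_of_all _ fun x => ?_)
  calc ‖c (p x)‖ ≤ ‖c 0‖ + ‖c (p x) - c 0‖ := norm_le_insert' _ _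
    _ ≤ ‖c 0‖ + K * ‖p x‖ := by simpa using hc.norm_sub_le (p x) 0

theorem integral_nonpos_of_forall_pos_eventually_le [IsFiniteMeasure μ] {ι : Type*}
    {l : Filter ι} [l.NeBot] {f : α → ℝ} {u : ι → α → ℝ} (hf : Integrable f μ)
    (hu : ∀ k, Integrable (u k) μ) (hlim : Tendsto (fun k => ∫ x, u k x ∂μ) l (𝓝 0))
    (hle : ∀ ε > 0, ∀ᶠ k in l, ∀ᵐ x ∂μ, f x ≤ ε + u k x) : ∫ x, f x ∂μ ≤ 0 := by
  have hbound : ∀ ε > 0, ∫ x, f x ∂μ ≤ ε * μ.real univ := by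
    intro ε hε
    refine ge_of_tendsto (by simpa using hlim.const_add (ε * μ.real univ))
      ((hle ε hε).mono fun k hk => ?_)
    calc ∫ x, f x ∂μ ≤ ∫ x, ε + u k x ∂μ := integral_mono_ae hf ((integrable_const ε).add (hu k)) hk
      _ = ε * μ.real univ + ∫ x, u k x ∂μ := by
        rw [integral_add (integrable_const ε) (hu k), integral_const, smul_eq_mul, mul_comm]
  have h0 : Tendsto (fun ε => ε * μ.real univ) (𝓝[>] 0) (𝓝 0) := by
    simpa using ((tendsto_id (x := 𝓝 (0:ℝ))).mul_const (μ.real univ)).mono_left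
      nhdsWithin_le_nhds
  exact ge_of_tendsto h0 (eventually_nhdsWithin_of_forall hbound)

theorem ae_nonpos_of_forall_pos_eventually_le_add_inner [IsFiniteMeasure μ] {ι : Type*}
    {l : Filter ι} [l.NeBot] {f : α → ℝ} {v : ι → α → F} {v₀ G : α → F} (hf : Integrable f μ)
    (hv : ∀ k, MemLp (v k) 2 μ) (hv₀ : MemLp v₀ 2 μ) (hG : MemLp G 2 μ)
    (hweak : ∀ g : α → F, MemLp g 2 μ →
      Tendsto (fun k => ∫ x, ⟪v k x, g x⟫ ∂μ) l (𝓝 (∫ x, ⟪v₀ x, g x⟫ ∂μ)))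
    (hle : ∀ ε > 0, ∀ᶠ k in l, ∀ᵐ x ∂μ, f x ≤ ε + ⟪v₀ x - v k x, G x⟫) :
    ∀ᵐ x ∂μ, f x ≤ 0 := by
  refine ae_le_of_forall_setIntegral_le hf (integrable_zero _ _ μ) fun A hA _ => ?_
  rw [integral_zero, ← integral_indicator hA]
  have hg : MemLp (A.indicator G) 2 μ := hG.indicator hA
  have hlim : Tendsto (fun k => ∫ x, ⟪v₀ x - v k x, A.indicator G x⟫ ∂μ) l (𝓝 0) := by
    have hsplit : ∀ k, ∫ x, ⟪v₀ x - v k x, A.indicator G x⟫ ∂μ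
        = ∫ x, ⟪v₀ x, A.indicator G x⟫ ∂μ - ∫ x, ⟪v k x, A.indicator G x⟫ ∂μ := fun k => by
      simp_rw [inner_sub_left]
      exact integral_sub (hv₀.integrable_inner hg) ((hv k).integrable_inner hg)
    simp_rw [hsplit]
    simpa using (tendsto_const_nhds (x := ∫ x, ⟪v₀ x, A.indicator G x⟫ ∂μ)).sub (hweak _ hg)
  refine integral_nonpos_of_forall_pos_eventually_le (hf.indicator hA)
    (fun k => (hv₀.sub (hv k)).integrable_inner hg) hlim fun ε hε => ?_
  filter_upwards [hle ε hε] with k hk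
  filter_upwards [hk] with x hx
  by_cases hxA : x ∈ A
  · simpa [hxA] using hx
  · simp [hxA, hε.le]

end Integrals

theorem mixed_constraint_weakly_closed_general {n m : ℕ} (T : ℝ) (C : ℝ)
    (c : EuclideanSpace ℝ (Fin n) × EuclideanSpace ℝ (Fin m) → ℝ)
    (hc1 : ContDiff ℝ 1 c)
    (hcconv : ∀ x : EuclideanSpace ℝ (Fin n), ConvexOn ℝ Set.univ (fun v => c (x, v)))
    (hder : ∀ p, ‖fderiv ℝ c p‖ ≤ C)
    (γk : ℕ → ℝ → EuclideanSpace ℝ (Fin n))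
    (vk : ℕ → ℝ → EuclideanSpace ℝ (Fin m))
    (γbar : ℝ → EuclideanSpace ℝ (Fin n))
    (vbar : ℝ → EuclideanSpace ℝ (Fin m))
    (hγcont : ∀ k, ContinuousOn (γk k) (Set.Icc 0 T))
    (hγunif : TendstoUniformlyOn γk γbar Filter.atTop (Set.Icc 0 T))
    (hvk : ∀ k, MemLp (vk k) 2 (volume.restrict (Set.Ioc (0:ℝ) T)))
    (hvbar : MemLp vbar 2 (volume.restrict (Set.Ioc (0:ℝ) T)))
    (hweak : ∀ g : ℝ → EuclideanSpace ℝ (Fin m),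
      MemLp g 2 (volume.restrict (Set.Ioc (0:ℝ) T)) →
      Filter.Tendsto (fun k => ∫ t in Set.Ioc (0:ℝ) T, ⟪vk k t, g t⟫)
        Filter.atTop (nhds (∫ t in Set.Ioc (0:ℝ) T, ⟪vbar t, g t⟫)))
    (hconstr : ∀ k, ∀ᵐ t ∂(volume.restrict (Set.Ioc (0:ℝ) T)),
      c (γk k t, vk k t) ≤ 0) :
    ∀ᵐ t ∂(volume.restrict (Set.Ioc (0:ℝ) T)), c (γbar t, vbar t) ≤ 0 := by
  set μ := volume.restrict (Ioc (0:ℝ) T)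
  set K := C.toNNReal
  have hdiff : Differentiable ℝ c := hc1.differentiable one_ne_zero
  have hlip : LipschitzWith K c := lipschitzWith_of_nnnorm_fderiv_le hdiff fun p => by
    rw [← NNReal.coe_le_coe, coe_nnnorm]
    exact (hder p).trans (Real.le_coe_toNNReal C)
  have hγbar : ContinuousOn γbar (Icc 0 T) := hγunif.continuousOn (.of_forall hγcont)
  have hpair : Integrable (fun t => (γbar t, vbar t)) μ :=
    (hγbar.integrableOn_Icc.mono_set Ioc_subset_Icc_self).prodMk (hvbar.integrable one_le_two)
  have hG : MemLp (fun t => ∇ (fun v => c (γbar t, v)) (vbar t)) 2 μ :=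
    .of_bound ((continuous_gradient_prodMk_right hc1).comp_aestronglyMeasurable hpair.1) K
      (ae_of_all _ fun t => norm_gradient_prodMk_right_le hlip _ _)
  refine ae_nonpos_of_forall_pos_eventually_le_add_inner (hlip.integrable_comp hpair) hvk hvbar
    hG hweak fun ε hε => ?_
  filter_upwards [hγunif.eventually_forall_mul_norm_sub_le K hε] with k hk
  filter_upwards [hconstr k, ae_restrict_mem measurableSet_Ioc] with t hct ht
  linarith [hk t (Ioc_subset_Icc_self ht),
    le_add_mul_norm_sub_add_inner_gradient hdiff hlip hcconv (γbar t) (γk k t) (vbar t) (vk k t)]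

/-- Weak closedness of mixed state-control constraints: if γ_k → γ̄ uniformly and
v_k ⇀ v̄ weakly in L², with c C¹, convex in v, with bounded derivative and
D_v c(γ̄(·),v̄(·)) ∈ L², then the constraint c ≤ 0 passes to the limit. -/
theorem mixed_constraint_weakly_closed {n m : ℕ} (T : ℝ) (hT : 0 < T) (C : ℝ)
    (c : EuclideanSpace ℝ (Fin n) × EuclideanSpace ℝ (Fin m) → ℝ)
    (hc1 : ContDiff ℝ 1 c)
    (hcconv : ∀ x : EuclideanSpace ℝ (Fin n), ConvexOn ℝ Set.univ (fun v => c (x, v)))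
    (hder : ∀ p, ‖fderiv ℝ c p‖ ≤ C)
    (γk : ℕ → ℝ → EuclideanSpace ℝ (Fin n))
    (vk : ℕ → ℝ → EuclideanSpace ℝ (Fin m))
    (γbar : ℝ → EuclideanSpace ℝ (Fin n))
    (vbar : ℝ → EuclideanSpace ℝ (Fin m))
    (hγcont : ∀ k, ContinuousOn (γk k) (Set.Icc 0 T))
    (hγunif : TendstoUniformlyOn γk γbar Filter.atTop (Set.Icc 0 T))
    (hvk : ∀ k, MemLp (vk k) 2 (volume.restrict (Set.Ioc (0:ℝ) T)))
    (hvbar : MemLp vbar 2 (volume.restrict (Set.Ioc (0:ℝ) T)))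
    (hweak : ∀ g : ℝ → EuclideanSpace ℝ (Fin m),
      MemLp g 2 (volume.restrict (Set.Ioc (0:ℝ) T)) →
      Filter.Tendsto (fun k => ∫ t in Set.Ioc (0:ℝ) T, ⟪vk k t, g t⟫)
        Filter.atTop (nhds (∫ t in Set.Ioc (0:ℝ) T, ⟪vbar t, g t⟫)))
    (hDvL2 : MemLp (fun t => fderiv ℝ c (γbar t, vbar t)) 2
      (volume.restrict (Set.Ioc (0:ℝ) T)))
    (hconstr : ∀ k, ∀ᵐ t ∂(volume.restrict (Set.Ioc (0:ℝ) T)),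
      c (γk k t, vk k t) ≤ 0) :
    ∀ᵐ t ∂(volume.restrict (Set.Ioc (0:ℝ) T)), c (γbar t, vbar t) ≤ 0 :=
  mixed_constraint_weakly_closed_general T C c hc1 hcconv hder γk vk γbar vbar hγcont hγunif hvk
    hvbar hweak hconstr
end
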